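/- Let L be a negative semidefinite self-adjoint operator on a finite-dimensional inner product space, and let X be a unit vector with ⟨X, L X⟩ ≥ -ε for some ε ≥ 0. Then for all t ≥ 0, ⟨X, e^{tL} X⟩ ≥ e^{-εt}. -/

import Mathlib

/-!
Diagonalize `L = U diag(μ) U*`. With `y = U* X`, the weights `wᵢ = |yᵢ|²` form a probability
vector, `⟨X, L X⟩ = ∑ wᵢ μᵢ` and `⟨X, e^{tL} X⟩ = ∑ wᵢ e^{t μᵢ}`, so the claim is Jensen's inequality
for the convex function `exp`: `∑ wᵢ e^{t μᵢ} ≥ e^{t ∑ wᵢ μᵢ} ≥ e^{-ε t}`.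
-/

open scoped Matrix ComplexOrder
open Matrix Unitary

theorem Real.exp_sum_mul_le_sum_mul_exp {ι : Type*} (s : Finset ι) {w p : ι → ℝ}
    (hw : ∀ i ∈ s, 0 ≤ w i) (hw1 : ∑ i ∈ s, w i = 1) :
    Real.exp (∑ i ∈ s, w i * p i) ≤ ∑ i ∈ s, w i * Real.exp (p i) := by
  simpa only [smul_eq_mul] using convexOn_exp.map_sum_le hw hw1 fun _ _ => Set.mem_univ _

theorem RCLike.exp_ofReal {𝕜 : Type*} [RCLike 𝕜] (r : ℝ) :
    NormedSpace.exp (r : 𝕜) = (Real.exp r : 𝕜) := by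
  rw [Real.exp_eq_exp_ℝ]
  exact (NormedSpace.map_exp (algebraMap ℝ 𝕜) RCLike.continuous_ofReal r).symm

namespace Matrix

variable {𝕜 : Type*} [RCLike 𝕜] {n : Type*} [Fintype n] [DecidableEq n]

theorem re_star_dotProduct_conjStarAlgAut_diagonal_mulVec
    (U : unitary (Matrix n n 𝕜)) (f : n → ℝ) (x : n → 𝕜) :
    RCLike.re (star x ⬝ᵥ conjStarAlgAut 𝕜 _ U (diagonal (RCLike.ofReal ∘ f)) *ᵥ x) =
      ∑ i, ‖((star U : Matrix n n 𝕜) *ᵥ x) i‖ ^ 2 * f i := by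
  set y := (star U : Matrix n n 𝕜) *ᵥ x
  have hy : star y = star x ᵥ* (U : Matrix n n 𝕜) := by
    rw [star_mulVec, ← star_eq_conjTranspose, star_star]
  rw [conjStarAlgAut_apply, ← mulVec_mulVec, ← mulVec_mulVec, dotProduct_mulVec, ← hy]
  simp only [dotProduct, mulVec_diagonal, Pi.star_apply, map_sum, Function.comp_apply]
  refine Finset.sum_congr rfl fun i _ => ?_
  rw [mul_left_comm, RCLike.star_def, RCLike.conj_mul, ← RCLike.ofReal_pow, ← RCLike.ofReal_mul,
    RCLike.ofReal_re, mul_comm]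

theorem sum_norm_sq_unitary_mulVec (U : unitary (Matrix n n 𝕜)) (x : n → 𝕜) :
    ∑ i, ‖((U : Matrix n n 𝕜) *ᵥ x) i‖ ^ 2 = RCLike.re (star x ⬝ᵥ x) := by
  simpa using (re_star_dotProduct_conjStarAlgAut_diagonal_mulVec (star U) 1 x).symm

theorem exp_conjStarAlgAut (U : unitary (Matrix n n 𝕜)) (M : Matrix n n 𝕜) :
    NormedSpace.exp (conjStarAlgAut 𝕜 _ U M) = conjStarAlgAut 𝕜 _ U (NormedSpace.exp M) := by
  simpa only [conjStarAlgAut_apply, Unitary.val_toUnits_apply, Unitary.val_inv_toUnits_apply,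
    ← Unitary.star_eq_inv, Unitary.coe_star] using exp_units_conj (toUnits U) M

namespace IsHermitian

variable {A : Matrix n n 𝕜} (hA : A.IsHermitian)

/-- The weight `|⟨vᵢ, x⟩|²` of `x` on the `i`-th eigenvector `vᵢ` of `A`. -/
noncomputable def spectralWeight (x : n → 𝕜) (i : n) : ℝ :=
  ‖((star hA.eigenvectorUnitary : Matrix n n 𝕜) *ᵥ x) i‖ ^ 2

theorem spectralWeight_nonneg (x : n → 𝕜) (i : n) : 0 ≤ hA.spectralWeight x i :=
  sq_nonneg _

theorem sum_spectralWeight (x : n → 𝕜) :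
    ∑ i, hA.spectralWeight x i = RCLike.re (star x ⬝ᵥ x) :=
  sum_norm_sq_unitary_mulVec (star hA.eigenvectorUnitary) x

theorem re_star_dotProduct_mulVec (x : n → 𝕜) :
    RCLike.re (star x ⬝ᵥ A *ᵥ x) = ∑ i, hA.spectralWeight x i * hA.eigenvalues i := by
  conv_lhs => rw [hA.spectral_theorem]
  exact re_star_dotProduct_conjStarAlgAut_diagonal_mulVec _ _ x

theorem exp_smul (t : ℝ) :
    NormedSpace.exp (t • A) = conjStarAlgAut 𝕜 _ hA.eigenvectorUnitary
      (diagonal (RCLike.ofReal ∘ fun i => Real.exp (t * hA.eigenvalues i))) := by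
  have htA : t • A = conjStarAlgAut 𝕜 _ hA.eigenvectorUnitary
      (diagonal (RCLike.ofReal ∘ fun i => t * hA.eigenvalues i)) := by
    conv_lhs => rw [hA.spectral_theorem]
    rw [RCLike.real_smul_eq_coe_smul (K := 𝕜), ← map_smul, ← diagonal_smul]
    congr 2
    ext i
    simp
  rw [htA, exp_conjStarAlgAut, exp_diagonal]
  congr 2
  ext i
  rw [Pi.coe_exp]
  exact RCLike.exp_ofReal _

theorem re_star_dotProduct_exp_smul_mulVec (t : ℝ) (x : n → 𝕜) :
    RCLike.re (star x ⬝ᵥ NormedSpace.exp (t • A) *ᵥ x) =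
      ∑ i, hA.spectralWeight x i * Real.exp (t * hA.eigenvalues i) := by
  rw [hA.exp_smul]
  exact re_star_dotProduct_conjStarAlgAut_diagonal_mulVec _ _ x

end IsHermitian

end Matrix

theorem stmt0_general {n : ℕ} (L : Matrix (Fin n) (Fin n) ℂ)
    (hHerm : L.IsHermitian)
    (X : Fin n → ℂ) (hX : star X ⬝ᵥ X = 1)
    (ε : ℝ)
    (hrate : -ε ≤ (star X ⬝ᵥ L.mulVec X).re) :
    ∀ t : ℝ, 0 ≤ t →
      Real.exp (-ε * t) ≤ (star X ⬝ᵥ (NormedSpace.exp (t • L)).mulVec X).re := by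
  intro t ht
  have hw1 : ∑ i, hHerm.spectralWeight X i = 1 := by
    simpa [hX] using hHerm.sum_spectralWeight X
  have hmean : -ε ≤ ∑ i, hHerm.spectralWeight X i * hHerm.eigenvalues i := by
    rwa [← hHerm.re_star_dotProduct_mulVec, RCLike.re_to_complex]
  rw [← RCLike.re_to_complex, hHerm.re_star_dotProduct_exp_smul_mulVec]
  calc Real.exp (-ε * t)
      ≤ Real.exp (∑ i, hHerm.spectralWeight X i * (t * hHerm.eigenvalues i)) := by
        rw [Real.exp_le_exp]
        simp only [mul_left_comm _ t, ← Finset.mul_sum]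
        linarith [mul_le_mul_of_nonneg_left hmean ht]
    _ ≤ _ := Real.exp_sum_mul_le_sum_mul_exp _
        (fun i _ => hHerm.spectralWeight_nonneg X i) hw1

/-- If `L` is a self-adjoint negative semidefinite operator (here: a Hermitian
matrix with `-L` positive semidefinite) and `X` is a unit vector with
`⟨X, L X⟩ ≥ -ε`, then `⟨X, e^{tL} X⟩ ≥ e^{-ε t}` for all `t ≥ 0`. -/
theorem stmt0 {n : ℕ} (L : Matrix (Fin n) (Fin n) ℂ)
    (hHerm : L.IsHermitian) (hNeg : (-L).PosSemidef)
    (X : Fin n → ℂ) (hX : star X ⬝ᵥ X = 1)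
    (ε : ℝ) (hε : 0 ≤ ε)
    (hrate : -ε ≤ (star X ⬝ᵥ L.mulVec X).re) :
    ∀ t : ℝ, 0 ≤ t →
      Real.exp (-ε * t) ≤ (star X ⬝ᵥ (NormedSpace.exp (t • L)).mulVec X).re :=
  stmt0_general L hHerm X hX ε hrate
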